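/- Let Z ∈ ℝ^N with Z ≥ 0, Z sorted in descending order, and suppose the projection of Z onto [0,1]^N has coordinate sum at least M (M a positive integer, M < N). Let Y be the Euclidean projection of Z onto D = {p ∈ [0,1]^N : Σ pₙ ≤ M}. Then there exists an index i* ∈ {0,...,N} and a Lagrange multiplier ρ ∈ ℝ such that yᵢ = 1 for i ≤ i*, yᵢ = zᵢ − ρ for indices i with 0 < yᵢ < 1, and yᵢ = 0 for the remaining indices; moreover zᵢ ≥ ρ + 1 whenever yᵢ = 1 and zᵢ ≤ ρ whenever yᵢ = 0. -/

import Mathlib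

/-!
Moving a mass `ε` from a coordinate `j` with `0 < Y j` to a coordinate `i` with `Y i < 1`
keeps `Y` in `D`, so the variational inequality `⟪Z - Y, P - Y⟫ ≤ 0` of the projection gives
`Z i - Y i ≤ Z j - Y j`. Any `ρ` separating the residuals `Z - Y` on `{Y < 1}` from those on
`{0 < Y}` is then the multiplier.
-/

open Finset

theorem Finite.exists_forall_le_forall_le {ι α : Type*} [Finite ι] [LinearOrder α] [Nonempty α]
    {p q : ι → Prop} {f g : ι → α} (h : ∀ i j, p i → q j → f i ≤ g j) :
    ∃ ρ, (∀ i, p i → f i ≤ ρ) ∧ ∀ j, q j → ρ ≤ g j := by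
  have := Fintype.ofFinite ι
  classical
  by_cases hq : ∃ j, q j
  · obtain ⟨j₀, hj₀, hmin⟩ :=
      (univ.filter q).exists_min_image g (by simpa [Finset.Nonempty] using hq)
    simp only [mem_filter, mem_univ, true_and] at hj₀ hmin
    exact ⟨g j₀, fun i hi => h i j₀ hi hj₀, hmin⟩
  · obtain ⟨ρ, hρ⟩ := (Set.toFinite (Set.range f)).bddAbove
    exact ⟨ρ, fun i _ => hρ ⟨i, rfl⟩, fun j hj => absurd ⟨j, hj⟩ hq⟩

theorem real_inner_sub_le_zero_of_forall_norm_sub_le {F : Type*} [NormedAddCommGroup F]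
    [InnerProductSpace ℝ F] {K : Set F} (hK : Convex ℝ K) {u v : F} (hv : v ∈ K)
    (hmin : ∀ w ∈ K, ‖u - v‖ ≤ ‖u - w‖) {w : F} (hw : w ∈ K) : inner ℝ (u - v) (w - v) ≤ 0 := by
  have : Nonempty K := ⟨⟨v, hv⟩⟩
  refine (norm_eq_iInf_iff_real_inner_le_zero hK hv).1 (le_antisymm ?_ ?_) w hw
  · exact le_ciInf fun w => hmin w w.2
  · exact ciInf_le (f := fun w : K => ‖u - w‖)
      ⟨0, Set.forall_mem_range.2 fun w => norm_nonneg _⟩ ⟨v, hv⟩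

section CappedSimplex

variable {ι : Type*} [Fintype ι]

def cappedSimplex (ι : Type*) [Fintype ι] (M : ℝ) : Set (EuclideanSpace ℝ ι) :=
  {p | (∀ n, 0 ≤ p n ∧ p n ≤ 1) ∧ ∑ n, p n ≤ M}

theorem convex_cappedSimplex (M : ℝ) : Convex ℝ (cappedSimplex ι M) := by
  rintro x ⟨hx, hxM⟩ y ⟨hy, hyM⟩ a b ha hb hab
  refine ⟨fun n => ⟨?_, ?_⟩, ?_⟩ <;>
    simp only [PiLp.add_apply, PiLp.smul_apply, smul_eq_mul]
  · nlinarith [hx n, hy n]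
  · nlinarith [hx n, hy n]
  · rw [sum_add_distrib, ← mul_sum, ← mul_sum]
    calc a * ∑ n, x n + b * ∑ n, y n ≤ a * M + b * M := by gcongr
      _ = M := by rw [← add_mul, hab, one_mul]

theorem add_smul_single_sub_single_mem_cappedSimplex [DecidableEq ι] {M ε : ℝ}
    {Y : EuclideanSpace ℝ ι} (hY : Y ∈ cappedSimplex ι M) {i j : ι} (hij : i ≠ j)
    (hε : 0 ≤ ε) (hi : Y i + ε ≤ 1) (hj : ε ≤ Y j) :
    Y + ε • (EuclideanSpace.single i 1 - EuclideanSpace.single j 1) ∈ cappedSimplex ι M := by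
  obtain ⟨hbox, hsum⟩ := hY
  refine ⟨fun n => ?_, ?_⟩
  · simp only [PiLp.add_apply, PiLp.smul_apply, PiLp.sub_apply, PiLp.single_apply,
      smul_eq_mul]
    have := hbox n
    by_cases hni : n = i
    · subst hni
      simp only [if_true, if_neg hij]
      constructor <;> linarith
    by_cases hnj : n = j
    · subst hnj
      simp only [if_true, if_neg hni]
      constructor <;> linarith
    · simpa only [if_neg hni, if_neg hnj, sub_zero, mul_zero, add_zero] using this
  · simp only [PiLp.add_apply, PiLp.smul_apply, PiLp.sub_apply, PiLp.single_apply,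
      smul_eq_mul, sum_add_distrib, ← mul_sum, sum_sub_distrib, sum_ite_eq', mem_univ, if_true]
    linarith

theorem sub_apply_le_sub_apply_of_forall_norm_sub_le {M : ℝ} {Z Y : EuclideanSpace ℝ ι}
    (hY : Y ∈ cappedSimplex ι M) (hproj : ∀ P ∈ cappedSimplex ι M, ‖Z - Y‖ ≤ ‖Z - P‖)
    {i j : ι} (hi : Y i < 1) (hj : 0 < Y j) : Z i - Y i ≤ Z j - Y j := by
  classical
  rcases eq_or_ne i j with rfl | hij
  · rfl
  set ε := min (1 - Y i) (Y j)
  have hε : 0 < ε := lt_min (by linarith) hj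
  have hP := add_smul_single_sub_single_mem_cappedSimplex hY hij hε.le
    (by linarith [min_le_left (1 - Y i) (Y j)]) (min_le_right _ _)
  have hvi := real_inner_sub_le_zero_of_forall_norm_sub_le (convex_cappedSimplex M) hY hproj hP
  rw [add_sub_cancel_left, inner_smul_right, inner_sub_right, EuclideanSpace.inner_single_right,
    EuclideanSpace.inner_single_right] at hvi
  simp only [PiLp.sub_apply, one_mul, conj_trivial] at hvi
  exact sub_nonpos.1 (nonpos_of_mul_nonpos_right hvi hε)

end CappedSimplex

theorem stmt_5_general (N M : ℕ)
    (Z Y : EuclideanSpace ℝ (Fin N))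
    (D : Set (EuclideanSpace ℝ (Fin N)))
    (hD : D = {p | (∀ n, 0 ≤ p n ∧ p n ≤ 1) ∧ ∑ n, p n ≤ (M : ℝ)})
    (hYD : Y ∈ D) (hproj : ∀ P ∈ D, ‖Z - Y‖ ≤ ‖Z - P‖) :
    ∃ istar : ℕ, istar ≤ N ∧ ∃ ρ : ℝ,
      (∀ i : Fin N, (i : ℕ) < istar → Y i = 1) ∧
      (∀ i : Fin N, Y i = 1 ∨ Y i = Z i - ρ ∨ Y i = 0) ∧
      (∀ i : Fin N, 0 < Y i → Y i < 1 → Y i = Z i - ρ) ∧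
      (∀ i : Fin N, Y i = 1 → ρ + 1 ≤ Z i) ∧
      (∀ i : Fin N, Y i = 0 → Z i ≤ ρ) := by
  subst hD
  obtain ⟨ρ, hfree, hpos⟩ := Finite.exists_forall_le_forall_le (f := fun i => Z i - Y i)
    (g := fun i => Z i - Y i) fun i j (hi : Y i < 1) (hj : 0 < Y j) =>
      sub_apply_le_sub_apply_of_forall_norm_sub_le hYD hproj hi hj
  have interior : ∀ i, 0 < Y i → Y i < 1 → Y i = Z i - ρ := fun i h0 h1 => by
    linarith [hfree i h1, hpos i h0]
  refine ⟨0, N.zero_le, ρ, fun i hi => absurd hi (Nat.not_lt_zero _), fun i => ?_, interior,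
    fun i h1 => by linarith [hpos i (by rw [h1]; norm_num)],
    fun i h0 => by linarith [hfree i (by rw [h0]; norm_num)]⟩
  rcases (hYD.1 i).2.eq_or_lt with h1 | h1
  · exact Or.inl h1
  rcases (hYD.1 i).1.eq_or_lt with h0 | h0
  · exact Or.inr (Or.inr h0.symm)
  · exact Or.inr (Or.inl (interior i h0 h1))

theorem stmt_5 (N M : ℕ) (hM : 0 < M) (hMN : M < N)
    (Z Y : EuclideanSpace ℝ (Fin N))
    (hZnonneg : ∀ i, 0 ≤ Z i)
    (hsort : ∀ i j : Fin N, i ≤ j → Z j ≤ Z i)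
    (hcube : (M : ℝ) ≤ ∑ i, min 1 (max 0 (Z i)))
    (D : Set (EuclideanSpace ℝ (Fin N)))
    (hD : D = {p | (∀ n, 0 ≤ p n ∧ p n ≤ 1) ∧ ∑ n, p n ≤ (M : ℝ)})
    (hYD : Y ∈ D) (hproj : ∀ P ∈ D, ‖Z - Y‖ ≤ ‖Z - P‖) :
    ∃ istar : ℕ, istar ≤ N ∧ ∃ ρ : ℝ,
      (∀ i : Fin N, (i : ℕ) < istar → Y i = 1) ∧
      (∀ i : Fin N, Y i = 1 ∨ Y i = Z i - ρ ∨ Y i = 0) ∧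
      (∀ i : Fin N, 0 < Y i → Y i < 1 → Y i = Z i - ρ) ∧
      (∀ i : Fin N, Y i = 1 → ρ + 1 ≤ Z i) ∧
      (∀ i : Fin N, Y i = 0 → Z i ≤ ρ) :=
  stmt_5_general N M Z Y D hD hYD hproj
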